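/- arXiv:1012.0524 — 9 statements merged into one kernel-verified Lean document; each statement's English description precedes it below -/
import Mathlib

section
/- Let q be a positive integer and define the binary word w of length q(q+1) by w[i] = a_i − a_{i−1} where a_i = ⌊i²/(2q(q+1))⌋. Then w contains no abelian square xx′ with |x| ≥ √(2q(q+1)). Equivalently, there are no indices i ≥ 0 and r ≥ √(2q(q+1)) with i + 2r ≤ q(q+1) such that the number of 1s in w[i+1..i+r] equals the number of 1s in w[i+r+1..i+2r]. -/
open Finset in
theorem stmt_1 (q : ℕ) (hq : 0 < q)
    (a : ℕ → ℕ) (ha : ∀ i, a i = i ^ 2 / (2 * q * (q + 1)))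
    (w : ℕ → ℕ) (hw : ∀ i, w i = a i - a (i - 1)) :
    ¬ ∃ i r : ℕ, 1 ≤ r ∧ Real.sqrt (2 * q * (q + 1)) ≤ (r : ℝ) ∧
      i + 2 * r ≤ q * (q + 1) ∧
      (∑ j ∈ Icc (i + 1) (i + r), w j) = ∑ j ∈ Icc (i + r + 1) (i + 2 * r), w j := by
  set N := 2 * q * (q + 1) with hN
  have hN0 : 0 < N := by positivity
  have hmono : ∀ m n : ℕ, m ≤ n → a m ≤ a n := by
    intro m n h
    rw [ha, ha]
    exact Nat.div_le_div_right (Nat.pow_le_pow_left h 2)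
  have hsum : ∀ i r : ℕ, (∑ j ∈ Icc (i + 1) (i + r), w j) = a (i + r) - a i := by
    intro i r
    induction r with
    | zero => simp
    | succ r ih =>
      have h1 : i + 1 ≤ i + r + 1 := by omega
      have h2 : i + (r + 1) = i + r + 1 := by omega
      rw [h2, Finset.sum_Icc_succ_top h1, ih, hw (i + r + 1)]
      have hm1 : a i ≤ a (i + r) := hmono _ _ (by omega)
      have hm2 : a (i + r) ≤ a (i + r + 1) := hmono _ _ (by omega)
      have h3 : i + r + 1 - 1 = i + r := by omega
      rw [h3]
      omega
  rintro ⟨i, r, hr1, hrs, hle, heq⟩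
  -- from sqrt bound: N ≤ r ^ 2
  have hNr : N ≤ r ^ 2 := by
    have h1 : (Real.sqrt N) ^ 2 = (N : ℝ) := Real.sq_sqrt (by positivity)
    have h2 : (N : ℝ) ≤ (r : ℝ) ^ 2 := by
      rw [← h1]
      have hs : (0 : ℝ) ≤ Real.sqrt N := Real.sqrt_nonneg _
      have hcast : ((N : ℕ) : ℝ) = 2 * (q : ℝ) * ((q : ℝ) + 1) := by
        rw [hN]; push_cast; ring
      have : (Real.sqrt N : ℝ) ≤ (r : ℝ) := by rw [hcast]; exact hrs
      nlinarith
    exact_mod_cast h2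
  rw [hsum i r] at heq
  have h2r : i + r + (r) = i + 2 * r := by omega
  have heq2 : (∑ j ∈ Icc (i + r + 1) (i + 2 * r), w j) = a (i + 2 * r) - a (i + r) := by
    rw [← h2r, hsum (i + r) r]
  rw [heq2] at heq
  have hm1 : a i ≤ a (i + r) := hmono _ _ (by omega)
  have hm2 : a (i + r) ≤ a (i + 2 * r) := hmono _ _ (by omega)
  have hkey : a i + a (i + 2 * r) = 2 * a (i + r) := by omega
  -- contradiction: a i + a (i+2r) ≥ 2 * a (i+r) + 1
  have hx : N * (a i) + i ^ 2 % N = i ^ 2 := by rw [ha]; exact Nat.div_add_mod _ _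
  have hy : N * (a (i + 2 * r)) + (i + 2 * r) ^ 2 % N = (i + 2 * r) ^ 2 := by
    rw [ha]; exact Nat.div_add_mod _ _
  have hz : N * (a (i + r)) + (i + r) ^ 2 % N = (i + r) ^ 2 := by
    rw [ha]; exact Nat.div_add_mod _ _
  have hmx : i ^ 2 % N < N := Nat.mod_lt _ hN0
  have hmy : (i + 2 * r) ^ 2 % N < N := Nat.mod_lt _ hN0
  have hident : i ^ 2 + (i + 2 * r) ^ 2 = 2 * (i + r) ^ 2 + 2 * r ^ 2 := by ring
  -- N * (a i + a (i+2r)) ≥ N * (2 * a (i+r)) + 2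
  have hmz : 0 ≤ (i + r) ^ 2 % N := Nat.zero_le _
  have hbig : N * (a i + a (i + 2 * r)) ≥ N * (2 * a (i + r)) + 2 := by
    zify at hx hy hz hmx hmy hmz hNr hident ⊢
    nlinarith [hx, hy, hz, hmx, hmy, hmz, hNr, hident]
  rw [hkey] at hbig
  omega
end

section
/- Let q be a positive integer and a_i = ⌊i²/(2q(q+1))⌋. If i ≥ 0 and r ≥ 1 are integers with i + 2r ≤ q(q+1) and a_{i+r} − a_i = a_{i+2r} − a_{i+r}, then r² < 2q(q+1). -/
theorem stmt_2 (q : ℕ) (hq : 0 < q)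
    (a : ℕ → ℕ) (ha : ∀ i, a i = i ^ 2 / (2 * q * (q + 1)))
    (i r : ℕ) (hr : 1 ≤ r) (hle : i + 2 * r ≤ q * (q + 1))
    (hcol : a (i + r) - a i = a (i + 2 * r) - a (i + r)) :
    r ^ 2 < 2 * q * (q + 1) := by
  set D := 2 * q * (q + 1) with hD
  have hDpos : 0 < D := by positivity
  have h1 : D * a i ≤ i ^ 2 := by rw [ha]; exact Nat.mul_div_le _ _
  have h1' : i ^ 2 < D * (a i + 1) := by
    rw [ha]; exact Nat.lt_mul_div_succ _ hDpos
  have h3 : D * a (i + 2 * r) ≤ (i + 2 * r) ^ 2 := by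
    rw [ha]; exact Nat.mul_div_le _ _
  have h3' : (i + 2 * r) ^ 2 < D * (a (i + 2 * r) + 1) := by
    rw [ha]; exact Nat.lt_mul_div_succ _ hDpos
  have h2 : D * a (i + r) ≤ (i + r) ^ 2 := by
    rw [ha]; exact Nat.mul_div_le _ _
  -- monotonicity
  have hm1 : a i ≤ a (i + r) := by
    rw [ha, ha]; exact Nat.div_le_div_right (Nat.pow_le_pow_left (by omega) 2)
  have hm2 : a (i + r) ≤ a (i + 2 * r) := by
    rw [ha, ha]; exact Nat.div_le_div_right (Nat.pow_le_pow_left (by omega) 2)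
  have hkey : a i + a (i + 2 * r) = 2 * a (i + r) := by omega
  have hsq : (i + 2 * r) ^ 2 + i ^ 2 = 2 * (i + r) ^ 2 + 2 * r ^ 2 := by ring
  -- combine: D*(a i + a(i+2r) + 2) > i^2 + (i+2r)^2 = 2(i+r)^2 + 2r^2 ≥ 2*D*a(i+r) + 2r^2
  nlinarith [h1', h3', h2, hkey, hsq]
end

section
/- For every integer k ≥ 1, the binary word 0^{2k−2} 1^{2k−1} 0^{2k−1} 1^{2k−2} (of length 8k−6) contains no abelian square xx′ with |x| ≥ k. -/
/-!
Let `f i` be the number of `1`s among the first `i` letters of the word. Occurrences of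
`x x'` at position `p` with `|x| = m` and `x'` a permutation of `x` force
`f p + f (p + 2m) = 2 f (p + m)`. Here `f` is piecewise linear with slopes `0, 1, 0, 1` on
blocks of lengths `2k-2, 2k-1, 2k-1, 2k-2`, and a case analysis on the blocks containing
`p`, `p + m`, `p + 2m` shows that this midpoint condition fails as soon as `m ≥ k`.
-/

theorem List.count_take_add_count_take_of_perm {α : Type*} [BEq α] {w u v x x' : List α}
    (hw : w = u ++ x ++ x' ++ v) (hperm : x'.Perm x) (c : α) :
    (w.take u.length).count c + (w.take (u.length + 2 * x.length)).count c
      = 2 * (w.take (u.length + x.length)).count c := by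
  have hlen : x'.length = x.length := hperm.length_eq
  have take_u : w.take u.length = u := by simp [hw]
  have take_ux : w.take (u.length + x.length) = u ++ x := by
    rw [hw, List.append_assoc _ x', show u.length + x.length = (u ++ x).length by simp]
    exact List.take_left
  have take_uxx : w.take (u.length + 2 * x.length) = u ++ x ++ x' := by
    rw [hw, show u.length + 2 * x.length = (u ++ x ++ x').length by simp [hlen]; omega]
    exact List.take_left
  rw [take_u, take_ux, take_uxx]
  simp only [List.count_append, hperm.count_eq]
  omega

theorem count_true_take_blocks (a b i : ℕ) :
    ((List.replicate a false ++ List.replicate b true ++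
      List.replicate b false ++ List.replicate a true).take i).count true
      = min (i - a) b + min (i - (a + 2 * b)) a := by
  simp only [List.append_assoc, List.take_append, List.take_replicate, List.length_replicate,
    List.count_append, List.count_replicate, beq_true, Bool.false_eq_true, reduceIte,
    zero_add, Nat.add_left_cancel_iff]
  omega

theorem stmt_4 (k : ℕ) (hk : 1 ≤ k) :
    ¬ ∃ (u v x x' : List Bool),
      List.replicate (2 * k - 2) false ++ List.replicate (2 * k - 1) true ++
        List.replicate (2 * k - 1) false ++ List.replicate (2 * k - 2) true
        = u ++ x ++ x' ++ v ∧ k ≤ x.length ∧ x'.Perm x := by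
  rintro ⟨u, v, x, x', hw, hk_le, hperm⟩
  have hfit : u.length + 2 * x.length ≤ 2 * (2 * k - 2) + 2 * (2 * k - 1) := by
    have := congrArg List.length hw
    simp only [List.length_append, List.length_replicate, hperm.length_eq] at this
    omega
  have hmid := List.count_take_add_count_take_of_perm hw hperm true
  simp only [count_true_take_blocks] at hmid
  omega
end

section
/- For every integer k ≥ 1, there exists a binary word of length at least k²/2 − √2·k containing no abelian square xx′ with |x| ≥ k. More precisely, taking q = ⌊(√(1+2k²) − 1)/2⌋, there is a binary word of length q(q+1) avoiding all abelian squares of order ≥ k, and q(q+1) > k²/2 − √2·k. -/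
/-- `w` contains no abelian square `x x'` with `k ≤ |x|`. -/
def AvoidsOrder (w : List Bool) (k : ℕ) : Prop :=
  ∀ u v x x' : List Bool, w = u ++ x ++ x' ++ v → x'.Perm x → x.length < k

/-!
Let `a i = ⌊i² / (2n)⌋` and let `w` be the word of length `n` whose `i`-th letter records whether
`a` increases at `i`. Since `(i + 1)² - i² ≤ 2n` for `i < n`, the sequence `a` grows by at most one
per step, so a factor of `w` starting at `p` of length `m` contains exactly `a (p + m) - a p` ones.
An abelian square of order `m` at `p` therefore forces `a p + a (p + 2m) = 2 a (p + m)`. Since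
`p² + (p + 2m)² - 2 (p + m)² = 2m²`, comparing with the remainders modulo `2n` gives `m² < 2n`.
For `n = q (q + 1)` with `q = ⌊(√(1 + 2k²) - 1) / 2⌋` one has `2n ≤ k²`, hence every abelian
square in `w` has order less than `k`.
-/

theorem List.count_true_map_range'_add {f : ℕ → ℕ} {s m : ℕ}
    (hf : ∀ i, s ≤ i → i < s + m → f i ≤ f (i + 1) ∧ f (i + 1) ≤ f i + 1) :
    f s + ((List.range' s m).map fun i => decide (f i < f (i + 1))).count true = f (s + m) := by
  induction m with
  | zero => simp
  | succ m ih =>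
    have hstep := hf (s + m) (by omega) (by omega)
    rw [List.range'_concat, List.map_append, List.count_append, ← Nat.add_assoc (f s),
      ih fun i hi hi' => hf i hi (by omega), one_mul, ← Nat.add_assoc s m 1]
    by_cases hlt : f (s + m) < f (s + m + 1) <;> simp [hlt] <;> omega

theorem List.eq_map_range'_of_map_range_eq {α : Type*} {g : ℕ → α} {n : ℕ} {u y v : List α}
    (h : (List.range n).map g = u ++ y ++ v) :
    y = (List.range' u.length y.length).map g := by
  have hlen : u.length + y.length ≤ n := by
    have := congrArg List.length h
    simp only [List.length_map, List.length_range, List.length_append] at this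
    omega
  calc y = ((u ++ y ++ v).drop u.length).take y.length := by simp
    _ = (List.range' u.length y.length).map g := by
      rw [← h, ← List.map_drop, ← List.map_take, List.range_eq_range', List.drop_range',
        List.take_range'_of_length_ge (by omega)]
      simp

theorem Nat.sq_lt_of_div_add_div_eq {N p m : ℕ} (hN : 0 < N)
    (h : p ^ 2 / N + (p + 2 * m) ^ 2 / N = 2 * ((p + m) ^ 2 / N)) : m ^ 2 < N := by
  have e0 := Nat.div_add_mod (p ^ 2) N
  have e1 := Nat.div_add_mod ((p + m) ^ 2) N
  have e2 := Nat.div_add_mod ((p + 2 * m) ^ 2) N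
  have r0 := Nat.mod_lt (p ^ 2) hN
  have r2 := Nat.mod_lt ((p + 2 * m) ^ 2) hN
  have hmul := congrArg (N * ·) h
  have hsq : p ^ 2 + (p + 2 * m) ^ 2 = 2 * (p + m) ^ 2 + 2 * m ^ 2 := by ring
  simp only [Nat.mul_add, Nat.mul_left_comm N 2] at hmul
  omega

def floorSqDiv (n i : ℕ) : ℕ := i ^ 2 / (2 * n)

def floorSqWord (n : ℕ) : List Bool :=
  (List.range n).map fun i => decide (floorSqDiv n i < floorSqDiv n (i + 1))

theorem length_floorSqWord (n : ℕ) : (floorSqWord n).length = n := by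
  simp [floorSqWord]

theorem floorSqDiv_le_succ (n i : ℕ) : floorSqDiv n i ≤ floorSqDiv n (i + 1) :=
  Nat.div_le_div_right (Nat.pow_le_pow_left (Nat.le_succ i) 2)

theorem floorSqDiv_succ_le {n i : ℕ} (h : i < n) : floorSqDiv n (i + 1) ≤ floorSqDiv n i + 1 := by
  have hsq : (i + 1) ^ 2 ≤ i ^ 2 + 2 * n := by nlinarith
  calc floorSqDiv n (i + 1) ≤ (i ^ 2 + 2 * n) / (2 * n) := Nat.div_le_div_right hsq
    _ = floorSqDiv n i + 1 := Nat.add_div_right _ (by omega)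

theorem floorSqDiv_add_count_eq {n : ℕ} {u y v : List Bool} (h : floorSqWord n = u ++ y ++ v) :
    floorSqDiv n u.length + y.count true = floorSqDiv n (u.length + y.length) := by
  have hlen : u.length + y.length ≤ n := by
    have := congrArg List.length h
    simp only [length_floorSqWord, List.length_append] at this
    omega
  rw [List.eq_map_range'_of_map_range_eq h, List.length_map, List.length_range']
  refine List.count_true_map_range'_add fun i _ hi =>
    ⟨floorSqDiv_le_succ n i, floorSqDiv_succ_le ?_⟩
  omega

theorem sq_length_lt_of_floorSqWord_eq {n : ℕ} {u v x x' : List Bool}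
    (hw : floorSqWord n = u ++ x ++ x' ++ v) (hperm : x'.Perm x) (hx : 0 < x.length) :
    x.length ^ 2 < 2 * n := by
  have hlen : n = u.length + 2 * x.length + v.length := by
    have := congrArg List.length hw
    simp only [length_floorSqWord, List.length_append, hperm.length_eq] at this
    omega
  have hfirst := floorSqDiv_add_count_eq (v := x' ++ v) (by simpa [List.append_assoc] using hw)
  have hsecond := floorSqDiv_add_count_eq (u := u ++ x) hw
  rw [hperm.count_eq, List.length_append, hperm.length_eq] at hsecond
  refine Nat.sq_lt_of_div_add_div_eq (p := u.length) (by omega) ?_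
  simp only [floorSqDiv] at hfirst hsecond
  rw [two_mul x.length, ← Nat.add_assoc]
  omega

theorem avoidsOrder_floorSqWord {n k : ℕ} (hk : 0 < k) (hnk : 2 * n ≤ k ^ 2) :
    AvoidsOrder (floorSqWord n) k := by
  intro u v x x' hw hperm
  rcases Nat.eq_zero_or_pos x.length with hx | hx
  · omega
  have := sq_length_lt_of_floorSqWord_eq hw hperm hx
  exact lt_of_pow_lt_pow_left₀ 2 (Nat.zero_le k) (by omega)

theorem two_mul_mul_succ_le_sq {k q : ℕ} (hq : 2 * (q : ℝ) + 1 ≤ √(1 + 2 * k ^ 2)) :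
    2 * (q * (q + 1)) ≤ k ^ 2 := by
  have hsq : (2 * (q : ℝ) + 1) ^ 2 ≤ 1 + 2 * k ^ 2 :=
    (Real.le_sqrt (by positivity) (by positivity)).mp hq
  exact_mod_cast (by nlinarith : (2 * (q * (q + 1)) : ℝ) ≤ k ^ 2)

theorem sq_div_two_sub_sqrt_two_mul_lt {k q : ℕ} (hk : 1 ≤ k)
    (hq : √(1 + 2 * k ^ 2) - 2 < 2 * (q : ℝ) + 1) :
    (k : ℝ) ^ 2 / 2 - √2 * k < q * (q + 1) := by
  set s := √(1 + 2 * (k : ℝ) ^ 2)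
  have hkR : (1 : ℝ) ≤ k := by exact_mod_cast hk
  have hs2 : s ^ 2 = 1 + 2 * (k : ℝ) ^ 2 := Real.sq_sqrt (by positivity)
  have hs1 : 1 ≤ s := Real.one_le_sqrt.mpr (by nlinarith)
  have ht2 : √2 ^ 2 = 2 := Real.sq_sqrt (by norm_num)
  have ht1 : 1 ≤ √2 := Real.one_le_sqrt.mpr (by norm_num)
  have hs : s < √2 * k + 1 :=
    (Real.sqrt_lt' (by positivity)).mpr (by nlinarith)
  -- `q (q + 1) = ((2q + 1)² - 1) / 4 ≥ ((s - 2)² - 1) / 4 = k² / 2 + 1 - s`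
  have habs : (s - 2) ^ 2 ≤ (2 * (q : ℝ) + 1) ^ 2 :=
    sq_le_sq' (by linarith [(Nat.cast_nonneg q : (0 : ℝ) ≤ q)]) hq.le
  nlinarith

theorem stmt_6 (k : ℕ) (hk : 1 ≤ k) :
    ∀ q : ℕ, q = ⌊(Real.sqrt (1 + 2 * k ^ 2) - 1) / 2⌋₊ →
      (∃ w : List Bool, w.length = q * (q + 1) ∧ AvoidsOrder w k) ∧
      (k : ℝ) ^ 2 / 2 - Real.sqrt 2 * k < (q * (q + 1) : ℕ) := by
  rintro q rfl
  set s := √(1 + 2 * (k : ℝ) ^ 2)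
  have hs : 1 ≤ s := Real.one_le_sqrt.mpr (by nlinarith)
  have hupper : 2 * (⌊(s - 1) / 2⌋₊ : ℝ) + 1 ≤ s := by
    linarith [Nat.floor_le (by linarith : (0 : ℝ) ≤ (s - 1) / 2)]
  have hlower : s - 2 < 2 * (⌊(s - 1) / 2⌋₊ : ℝ) + 1 := by
    linarith [Nat.lt_floor_add_one ((s - 1) / 2)]
  refine ⟨⟨floorSqWord _, length_floorSqWord _,
    avoidsOrder_floorSqWord hk (two_mul_mul_succ_le_sq hupper)⟩, ?_⟩
  push_cast
  exact sq_div_two_sub_sqrt_two_mul_lt hk hlower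
end

section
/- For integers q ≥ 1 and k ≥ 1 with 2q(q+1) ≤ k², the binary word w of length q(q+1) defined by w[i] = ⌊i²/(2q(q+1))⌋ − ⌊(i−1)²/(2q(q+1))⌋ contains no abelian square of order k or greater. -/
open Finset in
lemma tele_aux (f : ℕ → ℕ) (hf : Monotone f) (i : ℕ) :
    ∀ r : ℕ, ∑ j ∈ Icc (i + 1) (i + r), (f j - f (j - 1)) = f (i + r) - f i := by
  intro r
  induction r with
  | zero => simp
  | succ n ih =>
    rw [show i + (n + 1) = (i + n) + 1 from rfl,
      Finset.sum_Icc_succ_top (by omega : i + 1 ≤ i + n + 1), ih]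
    have h1 : f i ≤ f (i + n) := hf (by omega)
    have h2 : f (i + n) ≤ f (i + n + 1) := hf (by omega)
    simp only [show i + n + 1 - 1 = i + n from rfl]
    omega

open Finset in
theorem stmt_8 (q k : ℕ) (hq : 1 ≤ q) (hk : 1 ≤ k) (hqk : 2 * q * (q + 1) ≤ k ^ 2)
    (w : ℕ → ℕ)
    (hw : ∀ i, w i = i ^ 2 / (2 * q * (q + 1)) - (i - 1) ^ 2 / (2 * q * (q + 1))) :
    ¬ ∃ i r : ℕ, k ≤ r ∧ i + 2 * r ≤ q * (q + 1) ∧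
      (∑ j ∈ Icc (i + 1) (i + r), w j) = ∑ j ∈ Icc (i + r + 1) (i + 2 * r), w j := by
  rintro ⟨i, r, hkr, _, hsum⟩
  set N := 2 * q * (q + 1) with hNdef
  have hN : 0 < N := by positivity
  set f : ℕ → ℕ := fun j => j ^ 2 / N with hf
  have hfm : Monotone f := fun a b hab =>
    Nat.div_le_div_right (Nat.pow_le_pow_left hab 2)
  have hwf : ∀ j, w j = f j - f (j - 1) := fun j => hw j
  rw [Finset.sum_congr rfl (fun j _ => hwf j), Finset.sum_congr rfl (fun j _ => hwf j),
    tele_aux f hfm i r] at hsum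
  have h2 : ∑ j ∈ Icc (i + r + 1) (i + 2 * r), (f j - f (j - 1)) = f (i + 2 * r) - f (i + r) := by
    have := tele_aux f hfm (i + r) r
    rw [show i + r + r = i + 2 * r by ring] at this
    exact this
  rw [h2] at hsum
  -- key inequalities
  have hm1 : f i ≤ f (i + r) := hfm (by omega)
  have hm2 : f (i + r) ≤ f (i + 2 * r) := hfm (by omega)
  -- step A
  have hA : ((i + 2 * r) ^ 2 + i ^ 2) / N < f (i + 2 * r) + f i + 2 := by
    rw [Nat.div_lt_iff_lt_mul hN]
    have ha := Nat.div_add_mod ((i + 2 * r) ^ 2) N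
    have hb := Nat.div_add_mod (i ^ 2) N
    have ha' := Nat.mod_lt ((i + 2 * r) ^ 2) hN
    have hb' := Nat.mod_lt (i ^ 2) hN
    simp only [hf]
    nlinarith [ha, hb, ha', hb']
  -- step B
  have hrN : N ≤ r ^ 2 := le_trans hqk (Nat.pow_le_pow_left hkr 2)
  have hB : 2 * f (i + r) + 2 ≤ ((i + 2 * r) ^ 2 + i ^ 2) / N := by
    rw [Nat.le_div_iff_mul_le hN]
    have hc := Nat.div_add_mod ((i + r) ^ 2) N
    have hd : N * ((i + r) ^ 2 / N) ≤ (i + r) ^ 2 := Nat.mul_div_le _ _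
    have hsq : (i + 2 * r) ^ 2 + i ^ 2 = 2 * (i + r) ^ 2 + 2 * r ^ 2 := by ring
    simp only [hf]
    nlinarith [hd, hrN]
  omega
end

section
/- There exists a constant c > 0 (e.g., c = 1/4) such that for all sufficiently large integers k, there is a binary word of length at least c·k² containing no abelian square xx′ with |x| ≥ k. Combined with the Entringer–Jackson–Schatz upper bound ℓ(k) < k² + 6k, the function ℓ(k) is Θ(k²). -/
/-- linear arithmetic core -/
lemma div_convex_aux {D p q m : ℕ} {P Q M pm qm mm R : ℕ}
    (hm : D * M + mm = m)
    (hpq : p + q = 2 * m + 2 * R)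
    (hr : 3 * D ≤ 2 * R + 2)
    (hpm : pm < D) (hp : D * P + pm = p)
    (hqm : qm < D) (hq : D * Q + qm = q) :
    2 * (D * M) + D ≤ D * P + D * Q := by
  linarith

/-- Strict midpoint convexity of `⌊·/D⌋` on squares at scale `r`. -/
lemma div_convex {D p q m r : ℕ} (hD : 0 < D) (hpq : p + q = 2 * m + 2 * r ^ 2)
    (hr : 3 * D ≤ 2 * r ^ 2 + 2) : 2 * (m / D) + 1 ≤ p / D + q / D := by
  have key : D * (2 * (m / D) + 1) ≤ D * (p / D + q / D) := by
    have e1 : D * (2 * (m / D) + 1) = 2 * (D * (m / D)) + D := by ring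
    have e2 : D * (p / D + q / D) = D * (p / D) + D * (q / D) := by ring
    rw [e1, e2]
    exact div_convex_aux (Nat.div_add_mod m D) hpq hr (Nat.mod_lt p hD)
      (Nat.div_add_mod p D) (Nat.mod_lt q hD) (Nat.div_add_mod q D)
  exact Nat.le_of_mul_le_mul_left key hD

def bword (n D : ℕ) : List Bool :=
  List.ofFn (fun i : Fin n => decide ((i + 1 : ℕ) ^ 2 / D ≠ (i : ℕ) ^ 2 / D))

lemma bword_length (n D : ℕ) : (bword n D).length = n := by simp [bword]

lemma bword_count {n D : ℕ} (hD : 2 * n ≤ D + 1) :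
    ∀ m, m ≤ n → ((bword n D).take m).count true = m ^ 2 / D := by
  intro m
  induction m with
  | zero => intro _; simp
  | succ m ih =>
    intro hm
    have hmn : m < n := hm
    have hD0 : 0 < D := by omega
    have h2m : 2 * m + 1 ≤ D := by omega
    have hstep : (m + 1) ^ 2 / D ≤ m ^ 2 / D + 1 := by
      have h1 : (m + 1) ^ 2 ≤ m ^ 2 + D := by nlinarith
      calc (m + 1) ^ 2 / D ≤ (m ^ 2 + D) / D := Nat.div_le_div_right h1
        _ = m ^ 2 / D + 1 := Nat.add_div_right _ hD0
    have hmono : m ^ 2 / D ≤ (m + 1) ^ 2 / D :=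
      Nat.div_le_div_right (by nlinarith)
    have hlt : m < (bword n D).length := by rw [bword_length]; exact hmn
    have hget : (bword n D)[m]? = some (decide ((m + 1 : ℕ) ^ 2 / D ≠ (m : ℕ) ^ 2 / D)) := by
      rw [List.getElem?_eq_getElem hlt]
      simp [bword]
    rw [List.take_succ, List.count_append, hget, ih (Nat.le_of_lt hmn)]
    by_cases hne : (m + 1 : ℕ) ^ 2 / D = m ^ 2 / D
    · simp [hne]
    · have heq : (m + 1 : ℕ) ^ 2 / D = m ^ 2 / D + 1 := by omega
      simp [hne, heq]

lemma lower (k : ℕ) (hk : 4 ≤ k) :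
    ∃ w : List Bool, AvoidsOrder w k ∧ (1 / 4 : ℝ) * (k : ℝ) ^ 2 ≤ (w.length : ℝ) := by
  have hk2 : 16 ≤ k ^ 2 := by
    calc (16 : ℕ) = 4 ^ 2 := rfl
      _ ≤ k ^ 2 := Nat.pow_le_pow_left hk 2
  have hmod := Nat.div_add_mod (k ^ 2) 3
  set n := k ^ 2 / 3 with hn_def
  set D := 2 * n - 1 with hD_def
  have hn : 5 ≤ n := by omega
  have hDn : 2 * n ≤ D + 1 := by omega
  have hD : 0 < D := by omega
  refine ⟨bword n D, ?_, ?_⟩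
  · intro u v x x' hw hperm
    by_contra hc
    push_neg at hc
    have hx' : x'.length = x.length := hperm.length_eq
    have hsum : u.length + x.length + x.length + v.length = n := by
      have h := congrArg List.length hw
      rw [bword_length] at h
      simp only [List.length_append] at h
      omega
    have hw1 : bword n D = u ++ (x ++ (x' ++ v)) := by simp [hw]
    have hw2 : bword n D = (u ++ x) ++ (x' ++ v) := by simp [hw]
    have e1 : ((bword n D).take u.length).count true = u.count true := by
      rw [hw1, List.take_left]
    have e2 : ((bword n D).take (u.length + x.length)).count true
        = u.count true + x.count true := by
      rw [hw2, show u.length + x.length = (u ++ x).length by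
        simp only [List.length_append], List.take_left, List.count_append]
    have e3 : ((bword n D).take (u.length + x.length + x.length)).count true
        = u.count true + x.count true + x'.count true := by
      rw [hw, show u.length + x.length + x.length = ((u ++ x) ++ x').length by
        simp only [List.length_append, hx'], List.take_left,
        List.count_append, List.count_append]
    have hcnt : x'.count true = x.count true := hperm.count_eq true
    have f1 := bword_count hDn u.length (by omega)
    have f2 := bword_count hDn (u.length + x.length) (by omega)
    have f3 := bword_count hDn (u.length + x.length + x.length) (by omega)
    rw [f1] at e1; rw [f2] at e2; rw [f3] at e3
    have hpq : u.length ^ 2 + (u.length + x.length + x.length) ^ 2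
        = 2 * (u.length + x.length) ^ 2 + 2 * x.length ^ 2 := by ring
    have hk2r : k ^ 2 ≤ x.length ^ 2 := Nat.pow_le_pow_left hc 2
    have hr3 : 3 * D ≤ 2 * x.length ^ 2 + 2 := by omega
    have hcv := div_convex hD hpq hr3
    omega
  · rw [bword_length]
    have h4 : k ^ 2 ≤ 4 * n := by omega
    have h4' : (k : ℝ) ^ 2 ≤ 4 * (n : ℝ) := by exact_mod_cast h4
    linarith

open Filter Asymptotics in
theorem stmt_9 :
    (∃ c : ℝ, 0 < c ∧ ∃ K : ℕ, ∀ k : ℕ, K ≤ k →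
      ∃ w : List Bool, AvoidsOrder w k ∧ c * (k : ℝ) ^ 2 ≤ (w.length : ℝ)) ∧
    (∀ ℓ : ℕ → ℕ,
      (∀ k, IsGreatest {n | ∃ w : List Bool, w.length = n ∧ AvoidsOrder w k} (ℓ k)) →
      (∀ k, 1 ≤ k → ℓ k < k ^ 2 + 6 * k) →
      (fun k : ℕ => (ℓ k : ℝ)) =Θ[atTop] fun k : ℕ => (k : ℝ) ^ 2) := by
  constructor
  · exact ⟨1 / 4, by norm_num, 4, fun k hk => lower k hk⟩
  · intro ℓ hg hub
    have hlb : ∀ k : ℕ, 4 ≤ k → (1 / 4 : ℝ) * (k : ℝ) ^ 2 ≤ (ℓ k : ℝ) := by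
      intro k hk
      obtain ⟨w, hav, hlen⟩ := lower k hk
      have hm : w.length ≤ ℓ k := (hg k).2 ⟨w, rfl, hav⟩
      calc (1 / 4 : ℝ) * (k : ℝ) ^ 2 ≤ (w.length : ℝ) := hlen
        _ ≤ (ℓ k : ℝ) := by exact_mod_cast hm
    constructor
    · apply Asymptotics.IsBigO.of_bound 7
      filter_upwards [Filter.eventually_ge_atTop 1] with k hk
      have h := hub k hk
      have h' : (ℓ k : ℝ) ≤ (k : ℝ) ^ 2 + 6 * (k : ℝ) := by
        have := Nat.le_of_lt h
        exact_mod_cast this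
      have hk1 : (1 : ℝ) ≤ (k : ℝ) := by exact_mod_cast hk
      rw [Real.norm_eq_abs, Real.norm_eq_abs,
        abs_of_nonneg (by positivity : (0:ℝ) ≤ ((ℓ k : ℕ) : ℝ)),
        abs_of_nonneg (by positivity : (0:ℝ) ≤ (k : ℝ) ^ 2)]
      nlinarith
    · apply Asymptotics.IsBigO.of_bound 4
      filter_upwards [Filter.eventually_ge_atTop 4] with k hk
      have h := hlb k hk
      rw [Real.norm_eq_abs, Real.norm_eq_abs,
        abs_of_nonneg (by positivity : (0:ℝ) ≤ (k : ℝ) ^ 2),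
        abs_of_nonneg (by positivity : (0:ℝ) ≤ ((ℓ k : ℕ) : ℝ))]
      linarith
end

section
/- Every binary word of length k² + 6k contains an abelian square xx′ with |x| ≥ k (Entringer–Jackson–Schatz). -/
/-!
Let `P i` be the number of 1s among the first `i` letters of the word. The factor of length `2m`
centred at position `c` is an abelian square exactly when `P (c - m) + P (c + m) - 2 * P c = 0`.
Suppose no such balance vanishes for `m ≥ k`. Increasing the radius by one changes a balance by at
most 1, so at a fixed centre all balances of radius in `[k, 3k)` share one sign. If this sign
differed between the centres `c` and `c + 1`, all the letters at positions `c + k, …, c + 3k - 1`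
would be equal, giving an abelian square of order `k`. Hence all balances of radius `k` have the
same sign, say positive (otherwise pass to the complementary word). Then the increments of `P`
over the `k + 2` consecutive blocks of length `k` starting at `2k` increase strictly, which is
impossible since they lie in `[0, k]`.
-/

theorem List.perm_of_length_eq_of_count_true_eq {l₁ l₂ : List Bool} (hl : l₁.length = l₂.length)
    (hc : l₁.count true = l₂.count true) : l₁.Perm l₂ := by
  rw [List.perm_iff_count]
  rintro (_ | _)
  · have := List.count_false_add_count_true l₁
    have := List.count_false_add_count_true l₂
    omega
  · exact hc

namespace AbelianSquare

/-- Meant for `m ≤ c`: the subtraction `c - m` truncates. -/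
def balance (P : ℕ → ℤ) (c m : ℕ) : ℤ := P (c - m) + P (c + m) - 2 * P c

def HasBinarySteps (P : ℕ → ℤ) : Prop := ∀ i, P i ≤ P (i + 1) ∧ P (i + 1) ≤ P i + 1

def AbelianSquareFree (P : ℕ → ℤ) (k n : ℕ) : Prop :=
  ∀ c m, k ≤ m → m ≤ c → c + m ≤ n → balance P c m ≠ 0

section

variable {P : ℕ → ℤ} {k n : ℕ}

theorem balance_zero {c : ℕ} : balance P c 0 = 0 := by
  simp only [balance, Nat.sub_zero, Nat.add_zero]
  ring

/-- `fun i => i - P i` counts the 1s of the complementary word. -/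
theorem HasBinarySteps.compl (hP : HasBinarySteps P) :
    HasBinarySteps fun i => (i : ℤ) - P i := by
  intro i
  have := hP i
  push_cast
  omega

theorem balance_compl {c m : ℕ} (hm : m ≤ c) :
    balance (fun i => (i : ℤ) - P i) c m = -balance P c m := by
  simp only [balance, Nat.cast_sub hm, Nat.cast_add]
  ring

theorem AbelianSquareFree.compl (h : AbelianSquareFree P k n) :
    AbelianSquareFree (fun i => (i : ℤ) - P i) k n := by
  intro c m hkm hmc hcm
  rw [balance_compl hmc, neg_ne_zero]
  exact h c m hkm hmc hcm

theorem HasBinarySteps.le_add_le (hP : HasBinarySteps P) (a : ℕ) :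
    ∀ j : ℕ, P a ≤ P (a + j) ∧ P (a + j) ≤ P a + j
  | 0 => by simp
  | j + 1 => by
    have := hP (a + j)
    have := hP.le_add_le a j
    push_cast
    rw [← add_assoc]
    omega

theorem eq_add_of_forall_lt_succ_eq (a : ℕ) :
    ∀ j : ℕ, (∀ i < j, P (a + i + 1) = P (a + i)) → P (a + j) = P a
  | 0, _ => rfl
  | j + 1, h => by
    rw [← add_assoc, h j j.lt_succ_self]
    exact eq_add_of_forall_lt_succ_eq a j fun i hi => h i (by omega)

theorem HasBinarySteps.abs_balance_succ_sub_le (hP : HasBinarySteps P) {c m : ℕ}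
    (hm : m + 1 ≤ c) : |balance P c (m + 1) - balance P c m| ≤ 1 := by
  have hl := hP (c - (m + 1))
  have hr := hP (c + m)
  rw [show c - (m + 1) + 1 = c - m by omega] at hl
  rw [abs_le, balance, balance, ← add_assoc]
  omega

theorem HasBinarySteps.succ_eq_of_balance_pos_of_balance_succ_neg (hP : HasBinarySteps P)
    {c m : ℕ} (hm : m ≤ c) (hpos : 0 < balance P c m) (hneg : balance P (c + 1) m < 0) :
    P (c + m + 1) = P (c + m) := by
  have := hP (c - m)
  have := hP (c + m)
  have := hP c
  rw [balance, show c + 1 - m = c - m + 1 by omega, show c + 1 + m = c + m + 1 by omega] at hneg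
  rw [balance] at hpos
  omega

theorem AbelianSquareFree.balance_pos_iff_of_radius (hP : HasBinarySteps P)
    (h : AbelianSquareFree P k n) {c : ℕ} :
    ∀ j, k + j ≤ c → c + (k + j) ≤ n → (0 < balance P c (k + j) ↔ 0 < balance P c k)
  | 0, _, _ => Iff.rfl
  | j + 1, hc, hn => by
    have hstep := abs_le.mp (hP.abs_balance_succ_sub_le (c := c) (m := k + j) (by omega))
    have h1 := h c (k + j + 1) (by omega) (by omega) (by omega)
    have h0 := h c (k + j) (by omega) (by omega) (by omega)
    rw [← h.balance_pos_iff_of_radius hP j (by omega) (by omega), ← add_assoc]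
    omega

theorem AbelianSquareFree.not_balance_pos_and_succ_neg (hP : HasBinarySteps P)
    (h : AbelianSquareFree P k n) {c : ℕ} (hc : 3 * k ≤ c) (hcn : c + 3 * k ≤ n) :
    ¬ (0 < balance P c k ∧ balance P (c + 1) k < 0) := by
  rintro ⟨hpos, hneg⟩
  -- the sign change persists at every radius in `[k, 3k)`, which forces `2k` equal letters
  have hflat : ∀ i < 2 * k, P (c + k + i + 1) = P (c + k + i) := by
    intro i hi
    have hpos' := (h.balance_pos_iff_of_radius hP (c := c) i (by omega) (by omega)).2 hpos
    have hneg' : balance P (c + 1) (k + i) < 0 := by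
      have := h.balance_pos_iff_of_radius hP (c := c + 1) i (by omega) (by omega)
      have := h (c + 1) (k + i) (by omega) (by omega) (by omega)
      omega
    rw [add_assoc c k i]
    exact hP.succ_eq_of_balance_pos_of_balance_succ_neg (by omega) hpos' hneg'
  have hmid := eq_add_of_forall_lt_succ_eq (c + k) k fun i hi => hflat i (by omega)
  have hend := eq_add_of_forall_lt_succ_eq (c + k) (2 * k) hflat
  apply h (c + 2 * k) k le_rfl (by omega) (by omega)
  rw [balance, show c + 2 * k - k = c + k by omega, show c + 2 * k + k = c + k + 2 * k by omega,
    show c + 2 * k = c + k + k by omega]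
  omega

theorem AbelianSquareFree.balance_succ_pos_iff (hP : HasBinarySteps P)
    (h : AbelianSquareFree P k n) {c : ℕ} (hc : 3 * k ≤ c) (hcn : c + 3 * k ≤ n) :
    0 < balance P (c + 1) k ↔ 0 < balance P c k := by
  have h0 := h c k le_rfl (by omega) (by omega)
  have h1 : balance P (c + 1) k ≠ 0 := by
    obtain rfl | hk := k.eq_zero_or_pos
    · exact absurd balance_zero h0
    · exact h (c + 1) k le_rfl (by omega) (by omega)
  have hP' := h.not_balance_pos_and_succ_neg hP hc hcn
  have hQ := h.compl.not_balance_pos_and_succ_neg hP.compl hc hcn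
  rw [balance_compl (c := c) (m := k) (by omega),
    balance_compl (c := c + 1) (m := k) (by omega)] at hQ
  omega

theorem AbelianSquareFree.balance_add_pos_iff (hP : HasBinarySteps P)
    (h : AbelianSquareFree P k n) {c : ℕ} (hc : 3 * k ≤ c) :
    ∀ d, c + d + 3 * k ≤ n → (0 < balance P (c + d) k ↔ 0 < balance P c k)
  | 0, _ => Iff.rfl
  | d + 1, hd => by
    rw [← add_assoc, h.balance_succ_pos_iff hP (by omega) (by omega)]
    exact h.balance_add_pos_iff hP hc d (by omega)

theorem not_forall_two_mul_lt_add_of_increment_le {E : ℕ → ℤ} {k : ℕ}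
    (hE : ∀ j ≤ k + 1, 0 ≤ E (j + 1) - E j ∧ E (j + 1) - E j ≤ k) :
    ¬ ∀ j ≤ k, 2 * E (j + 1) < E j + E (j + 2) := by
  intro hconv
  have hgrow : ∀ j ≤ k + 1, E 1 - E 0 + j ≤ E (j + 1) - E j := by
    intro j
    induction j with
    | zero => simp
    | succ j ih =>
      intro hj
      have := ih (by omega)
      have := hconv j (by omega)
      push_cast
      linarith
  have := hgrow (k + 1) le_rfl
  have := hE 0 (by omega)
  have := hE (k + 1) le_rfl
  push_cast at *
  linarith

theorem AbelianSquareFree.not_balance_pos (hP : HasBinarySteps P) (h : AbelianSquareFree P k n)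
    (hn : k ^ 2 + 6 * k ≤ n) : ¬ 0 < balance P (3 * k) k := by
  intro hpos
  apply not_forall_two_mul_lt_add_of_increment_le (E := fun j => P (2 * k + j * k)) (k := k)
  · intro j _
    have := hP.le_add_le (2 * k + j * k) k
    rw [show 2 * k + j * k + k = 2 * k + (j + 1) * k by ring] at this
    omega
  · intro j hj
    have hjk : j * k ≤ k ^ 2 := by rw [sq]; exact Nat.mul_le_mul_right k hj
    have := (h.balance_add_pos_iff hP le_rfl (j * k) (by omega)).2 hpos
    rw [balance, show 3 * k + j * k - k = 2 * k + j * k by omega,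
      show 3 * k + j * k + k = 2 * k + (j + 2) * k by ring,
      show 3 * k + j * k = 2 * k + (j + 1) * k by ring] at this
    linarith

theorem HasBinarySteps.not_abelianSquareFree (hP : HasBinarySteps P) (hn : k ^ 2 + 6 * k ≤ n) :
    ¬ AbelianSquareFree P k n := by
  intro h
  rcases (h (3 * k) k le_rfl (by omega) (by omega)).lt_or_gt with hneg | hpos
  · apply h.compl.not_balance_pos hP.compl hn
    rw [balance_compl (by omega)]
    exact neg_pos.mpr hneg
  · exact h.not_balance_pos hP hn hpos

end

theorem hasBinarySteps_count_take (w : List Bool) :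
    HasBinarySteps fun i => ((w.take i).count true : ℤ) := by
  intro i
  dsimp only
  have : w[i]?.toList.count true ≤ 1 :=
    List.count_le_length.trans (by cases w[i]? <;> simp)
  rw [List.take_add_one, List.count_append]
  push_cast
  omega

theorem exists_perm_of_balance_count_take_eq_zero {w : List Bool} {c m : ℕ} (hm : m ≤ c)
    (hcm : c + m ≤ w.length) (h : balance (fun i => ((w.take i).count true : ℤ)) c m = 0) :
    ∃ u v x x' : List Bool, w = u ++ x ++ x' ++ v ∧ x.length = m ∧ x'.Perm x := by
  obtain ⟨s, rfl⟩ : ∃ s, c = s + m := ⟨c - m, by omega⟩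
  refine ⟨w.take s, w.drop (s + m + m), (w.drop s).take m, (w.drop (s + m)).take m, ?_, ?_, ?_⟩
  · rw [← List.take_append_drop (s + m + m) w, List.take_add, List.take_add]
    simp
  · simp
    omega
  · apply List.perm_of_length_eq_of_count_true_eq (by simp; omega)
    simp only [balance, Nat.add_sub_cancel, List.take_add, List.count_append] at h
    push_cast at h
    omega

end AbelianSquare

open AbelianSquare in
theorem stmt_10_general (k : ℕ) (w : List Bool) (hw : w.length = k ^ 2 + 6 * k) :
    ∃ u v x x' : List Bool, w = u ++ x ++ x' ++ v ∧ k ≤ x.length ∧ x'.Perm x := by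
  have := (hasBinarySteps_count_take w).not_abelianSquareFree (k := k) hw.ge
  simp only [AbelianSquareFree, not_forall, not_not] at this
  obtain ⟨c, m, hkm, hmc, hcm, h⟩ := this
  obtain ⟨u, v, x, x', rfl, rfl, hperm⟩ := exists_perm_of_balance_count_take_eq_zero hmc hcm h
  exact ⟨u, v, x, x', rfl, hkm, hperm⟩

theorem stmt_10 (k : ℕ) (hk : 1 ≤ k) (w : List Bool) (hw : w.length = k ^ 2 + 6 * k) :
    ∃ u v x x' : List Bool, w = u ++ x ++ x' ++ v ∧ k ≤ x.length ∧ x'.Perm x :=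
  stmt_10_general k w hw
end

section
/- Let q ≥ 1 and set N = q(q+1), p = N + ⌈√(2N)⌉, and a_i = ⌊i²/(2N)⌋. Then a_p − a_N ≥ p − N + 1; consequently, there exists an integer n with N ≤ n < p such that a_{n+1} − a_n > 1. -/
theorem stmt_11 (q : ℕ) (hq : 1 ≤ q) (N p : ℕ) (hN : N = q * (q + 1))
    (hp : p = N + ⌈Real.sqrt (2 * N)⌉₊)
    (a : ℕ → ℕ) (ha : ∀ i, a i = i ^ 2 / (2 * N)) :
    a p - a N ≥ p - N + 1 ∧ ∃ n : ℕ, N ≤ n ∧ n < p ∧ 1 < a (n + 1) - a n := by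
  set c := ⌈Real.sqrt (2 * N)⌉₊ with hc
  obtain ⟨m, hm⟩ : ∃ m, N = 2 * m := by
    have := Nat.even_mul_succ_self q
    rw [← hN] at this
    exact this.exists_two_nsmul _
  have hmpos : 0 < m := by nlinarith
  have hNpos : 0 < 2 * N := by omega
  have hsq : 2 * N ≤ c ^ 2 := by
    have h1 : Real.sqrt (2 * N) ≤ (c : ℝ) := Nat.le_ceil _
    have h2 : ((2 * N : ℕ) : ℝ) ≤ ((c : ℕ) : ℝ) ^ 2 := by
      have h3 := Real.sq_sqrt (by positivity : (0:ℝ) ≤ 2 * (N:ℝ))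
      push_cast
      nlinarith [Real.sqrt_nonneg (2 * (N:ℝ))]
    exact_mod_cast h2
  have haN : a N = m := by
    rw [ha, hm, show (2 * m) ^ 2 = (2 * (2 * m)) * m by ring]
    exact Nat.mul_div_cancel_left m (by omega)
  have hap : a p = m + c + c ^ 2 / (2 * N) := by
    rw [ha, hp, show (N + c) ^ 2 = c ^ 2 + (2 * N) * (m + c) by rw [hm]; ring,
      Nat.add_mul_div_left _ _ hNpos]
    omega
  have hd : 1 ≤ c ^ 2 / (2 * N) := (Nat.one_le_div_iff hNpos).2 hsq
  constructor
  · rw [hap, haN, hp]; omega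
  · by_contra hcon
    push_neg at hcon
    have hmono : ∀ i j : ℕ, i ≤ j → a i ≤ a j := fun i j h => by
      rw [ha, ha]; exact Nat.div_le_div_right (Nat.pow_le_pow_left h 2)
    have key : ∀ k, k ≤ c → a (N + k) ≤ a N + k := by
      intro k
      induction k with
      | zero => simp
      | succ k ih =>
        intro hk
        show a (N + k + 1) ≤ a N + (k + 1)
        have h1 := ih (by omega)
        have h2 := hcon (N + k) (by omega) (by omega)
        have h3 := hmono (N + k) (N + k + 1) (by omega)
        omega
    have hfin := key c le_rfl
    rw [← hp] at hfin
    omega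
end

section
/- Suppose f : ℕ → ℤ satisfies i²/(2M) − 1 < f(i) ≤ i²/(2M) for a fixed positive real M. If i, r ≥ 0 are integers with f(i+r) − f(i) = f(i+2r) − f(i+r), then r² < 2M. -/
theorem stmt_13 (M : ℝ) (hM : 0 < M) (f : ℕ → ℤ)
    (hf : ∀ i : ℕ, (i : ℝ) ^ 2 / (2 * M) - 1 < (f i : ℝ) ∧ (f i : ℝ) ≤ (i : ℝ) ^ 2 / (2 * M))
    (i r : ℕ) (hcol : f (i + r) - f i = f (i + 2 * r) - f (i + r)) :
    (r : ℝ) ^ 2 < 2 * M := by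
  obtain ⟨h1, _⟩ := hf i
  obtain ⟨_, h2⟩ := hf (i + r)
  obtain ⟨h3, _⟩ := hf (i + 2 * r)
  have hc : (f (i + 2 * r) : ℝ) + f i - 2 * f (i + r) = 0 := by
    have : f (i + 2 * r) + f i - 2 * f (i + r) = 0 := by linarith
    exact_mod_cast congrArg (Int.cast : ℤ → ℝ) this
  push_cast at h1 h2 h3
  have h2M : (0:ℝ) < 2 * M := by linarith
  have e : ((i:ℝ) + 2*r)^2/(2*M) + (i:ℝ)^2/(2*M) - 2*(((i:ℝ)+r)^2/(2*M))
      = 2*(r:ℝ)^2/(2*M) := by field_simp; ring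
  have h5 : 2*(r:ℝ)^2/(2*M) < 2 := by linarith
  have h6 := (div_lt_iff₀ h2M).mp h5
  linarith
end
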